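/- The relation R between TPN states (M,v) and Marking Timed Automaton states (l, v̄), defined by (M,v) R (l,v̄) iff M = M(l) and v = v̄, is preserved by continuous transitions: if (M,v) R (l,v̄) and (M,v) →^{e(d)} (M,v+d) in the TPN, then (l,v̄) →^{ε(d)} (l, v̄+d) in the automaton and (M,v+d) R (l, v̄+d). -/

import Mathlib

open scoped ENNReal NNReal

def Enables {P T : Type*} (pre : T → P → ℕ) (M : P → ℕ) (t : T) : Prop :=
  ∀ p, pre t p ≤ M p

/-- TPN continuous transition of duration `d` from `(M,v)` (to `(M, v+d)`). -/
def TPNDelay {P T : Type*} (pre : T → P → ℕ) (β : T → ℝ≥0∞) (M : P → ℕ)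
    (v : T → ℝ≥0) (d : ℝ≥0) : Prop :=
  ∀ t, Enables pre M t → ((v t + d : ℝ≥0) : ℝ≥0∞) ≤ β t

/-- Invariant of the location `l` of the Marking Timed Automaton:
upper bounds `x_i ≤ β(t_i)` for the transitions enabled by the marking of `l`. -/
def Invariant {P T L : Type*} (pre : T → P → ℕ) (β : T → ℝ≥0∞) (Mk : L → P → ℕ)
    (l : L) (u : T → ℝ≥0) : Prop :=
  ∀ t, Enables pre (Mk l) t → ((u t : ℝ≥0) : ℝ≥0∞) ≤ β t

/-- TA continuous transition: the invariant holds along the whole delay. -/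
def TADelay {P T L : Type*} (pre : T → P → ℕ) (β : T → ℝ≥0∞) (Mk : L → P → ℕ)
    (l : L) (u : T → ℝ≥0) (d : ℝ≥0) : Prop :=
  ∀ t : ℝ≥0, t ≤ d → Invariant pre β Mk l (fun tk => u tk + t)

theorem Invariant.antitone {P T L : Type*} {pre : T → P → ℕ} {β : T → ℝ≥0∞} {Mk : L → P → ℕ}
    {l : L} {u u' : T → ℝ≥0} (h : Invariant pre β Mk l u) (hle : u' ≤ u) :
    Invariant pre β Mk l u' :=
  fun t ht => le_trans (by exact_mod_cast hle t) (h t ht)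

/-- Invariants only bound clocks from above, so a delay need only be checked at its end. -/
theorem tADelay_iff_invariant_add {P T L : Type*} {pre : T → P → ℕ} {β : T → ℝ≥0∞}
    {Mk : L → P → ℕ} {l : L} {u : T → ℝ≥0} {d : ℝ≥0} :
    TADelay pre β Mk l u d ↔ Invariant pre β Mk l (fun tk => u tk + d) :=
  ⟨fun h => h d le_rfl,
    fun h _ hle => h.antitone fun tk => add_le_add_right hle (u tk)⟩

/-- The relation `(M,v) R (l,v̄) ⟺ M = Mk l ∧ v = v̄` is preserved by
continuous transitions from the TPN to the Marking Timed Automaton. -/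
theorem relation_preserved_by_delay {P T L : Type*}
    (pre : T → P → ℕ) (β : T → ℝ≥0∞) (Mk : L → P → ℕ)
    (M : P → ℕ) (v : T → ℝ≥0) (l : L) (vbar : T → ℝ≥0) (d : ℝ≥0)
    (hM : M = Mk l) (hv : v = vbar)
    (hstep : TPNDelay pre β M v d) :
    TADelay pre β Mk l vbar d ∧
      M = Mk l ∧ (fun tk => v tk + d) = (fun tk => vbar tk + d) := by
  subst hM hv
  exact ⟨tADelay_iff_invariant_add.2 hstep, rfl, rfl⟩
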